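/- arXiv:1903.03274 — 3 statements merged into one kernel-verified Lean document; each statement's English description precedes it below -/
import Mathlib

section
/- The series ∑_{m=1}^∞ ((2m-2)!/(m!·(m-1)!) · 2/4^m)² converges to 4/π - 1. -/
/-!
Write `u n = C(2n, n) / 4 ^ n` for the probability that a simple random walk is back at `0` at
time `2n`; the summand is `(u m / (2 (m + 1))) ^ 2`. The recursion `u (n + 1) = u n (2n + 1) / (2n + 2)`
makes the partial sums telescope to `(4N + 1) u N ^ 2 - 1`, and Wallis' product says exactly that
`(2N + 1) u N ^ 2 → 2 / π`.
-/

open Real Filter Finset Topology Nat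

noncomputable def returnProb (n : ℕ) : ℝ := (centralBinom n : ℝ) / 4 ^ n

lemma returnProb_zero : returnProb 0 = 1 := by simp [returnProb]

lemma returnProb_succ (n : ℕ) :
    returnProb (n + 1) = returnProb n * (2 * n + 1) / (2 * (n + 1)) := by
  have h : ((n : ℝ) + 1) * centralBinom (n + 1) = 2 * (2 * n + 1) * centralBinom n := by
    exact_mod_cast succ_mul_centralBinom_succ n
  rw [returnProb, returnProb, pow_succ]
  field_simp
  linear_combination 2 * h

lemma cast_centralBinom_mul_factorial_mul_factorial (n : ℕ) :
    (centralBinom n : ℝ) * n ! * n ! = (2 * n)! := by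
  have h := choose_mul_factorial_mul_factorial (show n ≤ 2 * n by omega)
  rw [show 2 * n - n = n by omega, ← centralBinom_eq_two_mul_choose] at h
  exact_mod_cast h

lemma factorial_div_mul_div_four_pow (m : ℕ) :
    ((2 * m)! : ℝ) / ((m + 1)! * m !) * 2 / 4 ^ (m + 1) = returnProb m / (2 * (m + 1)) := by
  rw [← cast_centralBinom_mul_factorial_mul_factorial, factorial_succ, returnProb]
  have : (m ! : ℝ) ≠ 0 := by positivity
  push_cast
  field_simp
  ring

lemma sum_range_returnProb_div_sq (N : ℕ) :
    ∑ m ∈ range N, (returnProb m / (2 * (m + 1))) ^ 2 = (4 * N + 1) * returnProb N ^ 2 - 1 := by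
  induction N with
  | zero => simp [returnProb_zero]
  | succ N ih =>
    rw [sum_range_succ, ih, returnProb_succ]
    push_cast
    field_simp
    ring

lemma wallis_W_mul_returnProb_sq (n : ℕ) :
    Wallis.W n * ((2 * n + 1) * returnProb n ^ 2) = 1 := by
  rw [Wallis.W_eq_factorial_ratio, returnProb, ← cast_centralBinom_mul_factorial_mul_factorial,
    show (2 : ℝ) ^ (4 * n) = (4 ^ n) ^ 2 by
      rw [show (4 : ℝ) = 2 ^ 2 by norm_num, ← pow_mul, ← pow_mul]; ring_nf]
  have : (n ! : ℝ) ≠ 0 := by positivity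
  have : (centralBinom n : ℝ) ≠ 0 := by exact_mod_cast centralBinom_ne_zero n
  field_simp

lemma tendsto_mul_returnProb_sq :
    Tendsto (fun n : ℕ => (2 * n + 1) * returnProb n ^ 2) atTop (𝓝 (2 / π)) := by
  have h := Wallis.tendsto_W_nhds_pi_div_two.inv₀ (by positivity)
  rw [inv_div] at h
  refine h.congr fun n => ?_
  exact (eq_inv_of_mul_eq_one_right (wallis_W_mul_returnProb_sq n)).symm

lemma tendsto_returnProb_sq : Tendsto (fun n : ℕ => returnProb n ^ 2) atTop (𝓝 0) := by
  have h : Tendsto (fun n : ℕ => ((2 : ℝ) * n + 1)⁻¹) atTop (𝓝 0) :=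
    (tendsto_atTop_add_const_right _ 1
      (tendsto_natCast_atTop_atTop.const_mul_atTop two_pos)).inv_tendsto_atTop
  refine (zero_mul (2 / π) ▸ h.mul tendsto_mul_returnProb_sq).congr fun n => ?_
  field_simp

/-- `∑_{m=1}^∞ ((2m-2)!/(m!·(m-1)!) · 2/4^m)² = 4/π - 1`. -/
theorem stmt_5 :
    HasSum (fun m : ℕ =>
      (((2 * m).factorial : ℝ) / ((m + 1).factorial * m.factorial) * 2 / 4 ^ (m + 1)) ^ 2)
      (4 / π - 1) := by
  simp_rw [factorial_div_mul_div_four_pow]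
  rw [hasSum_iff_tendsto_nat_of_nonneg (fun m => by positivity)]
  simp_rw [sum_range_returnProb_div_sq]
  have h := ((tendsto_mul_returnProb_sq.const_mul 2).sub tendsto_returnProb_sq).sub_const 1
  convert h using 2 <;> ring
end

section
/- Define D(1,k) as the number of sequences of length k with entries in {+2, -1} whose every partial sum is at most 0 (i.e., walks never reaching 1) and whose total sum is 0 or -1. Then D(1,3m) = binomial(3m, m)/(2m+1), D(1,3m+1) = binomial(3m+1, m+1)/(2m+1), and D(1,3m+2) = 0 for all m ≥ 0. -/
open Finset

def wD (b : Bool) : ℤ := if b then 2 else -1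

def prefD {k : ℕ} (ε : Fin k → Bool) (j : ℕ) : ℤ :=
  ∑ i ∈ Finset.univ.filter (fun i : Fin k => (i : ℕ) < j), wD (ε i)

lemma prefD_top {k : ℕ} (ε : Fin k → Bool) {j : ℕ} (h : k ≤ j) :
    prefD ε j = ∑ i, wD (ε i) := by
  unfold prefD
  rw [Finset.filter_true_of_mem]
  intro i _
  exact lt_of_lt_of_le i.isLt h

lemma prefD_succ {k : ℕ} (ε : Fin (k+1) → Bool) (j : ℕ) :
    prefD ε j = prefD (Fin.init ε) j + if k < j then wD (ε (Fin.last k)) else 0 := by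
  unfold prefD
  rw [Finset.sum_filter, Finset.sum_filter, Fin.sum_univ_castSucc]
  simp [Fin.init]

lemma totalD_succ {k : ℕ} (ε : Fin (k+1) → Bool) :
    (∑ i, wD (ε i)) = (∑ i, wD (Fin.init ε i)) + wD (ε (Fin.last k)) :=
  Fin.sum_univ_castSucc (fun i => wD (ε i))

def SW (k : ℕ) (e : ℤ) : Type :=
  {ε : Fin k → Bool // (∑ i, wD (ε i)) = -e ∧ ∀ j, j ≤ k → prefD ε j ≤ 0}

instance instSWfin (k : ℕ) (e : ℤ) : Finite (SW k e) := by
  unfold SW; infer_instance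

noncomputable def gD (k : ℕ) (e : ℤ) : ℕ := Nat.card (SW k e)

lemma gD_neg {k : ℕ} {e : ℤ} (he : e < 0) : gD k e = 0 := by
  have : IsEmpty (SW k e) := ⟨fun x => by
    obtain ⟨ε, h1, h2⟩ := x
    have h := h2 k le_rfl
    rw [prefD_top ε le_rfl, h1] at h
    omega⟩
  exact Nat.card_of_isEmpty

lemma gD_gt {k : ℕ} {e : ℤ} (he : (k : ℤ) < e) : gD k e = 0 := by
  have : IsEmpty (SW k e) := ⟨fun x => by
    obtain ⟨ε, h1, _⟩ := x
    have hb : (-(k:ℤ)) ≤ ∑ i, wD (ε i) := by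
      calc (-(k:ℤ)) = ∑ _i : Fin k, (-1 : ℤ) := by simp
      _ ≤ ∑ i, wD (ε i) := Finset.sum_le_sum (fun i _ => by cases ε i <;> simp [wD])
    omega⟩
  exact Nat.card_of_isEmpty

lemma gD_mod {k : ℕ} {e : ℤ} (he : ¬ (3:ℤ) ∣ ((k:ℤ) - e)) : gD k e = 0 := by
  have : IsEmpty (SW k e) := ⟨fun x => by
    obtain ⟨ε, h1, _⟩ := x
    have hd : (3:ℤ) ∣ ∑ i, (wD (ε i) + 1) :=
      Finset.dvd_sum (fun i _ => by cases ε i <;> simp [wD])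
    rw [Finset.sum_add_distrib, h1] at hd
    simp at hd
    apply he
    have : (k:ℤ) - e = (-e + k) + (-3*e) + 3*e := by ring
    omega⟩
  exact Nat.card_of_isEmpty

-- membership lemmas
lemma init_mem {k : ℕ} {e : ℤ} (ε : Fin (k+1) → Bool)
    (h1 : (∑ i, wD (ε i)) = -e) (h2 : ∀ j, j ≤ k+1 → prefD ε j ≤ 0) :
    (∑ i, wD (Fin.init ε i)) = -(e + wD (ε (Fin.last k))) ∧
      ∀ j, j ≤ k → prefD (Fin.init ε) j ≤ 0 := by
  constructor
  · have ht := totalD_succ ε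
    rw [h1] at ht
    linarith
  · intro j hj
    have h := h2 j (by omega)
    rwa [prefD_succ, if_neg (by omega), add_zero] at h

lemma snoc_mem {k : ℕ} {e : ℤ} (he : 0 ≤ e) (b : Bool) (δ : Fin k → Bool)
    (h1 : (∑ i, wD (δ i)) = -(e + wD b)) (h2 : ∀ j, j ≤ k → prefD δ j ≤ 0) :
    (∑ i, wD ((Fin.snoc δ b : Fin (k+1) → Bool) i)) = -e ∧ ∀ j, j ≤ k+1 → prefD (Fin.snoc δ b : Fin (k+1) → Bool) j ≤ 0 := by
  have ht := totalD_succ (Fin.snoc δ b : Fin (k+1) → Bool)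
  rw [Fin.init_snoc, Fin.snoc_last, h1] at ht
  have ht' : (∑ i, wD ((Fin.snoc δ b : Fin (k+1) → Bool) i)) = -e := by rw [ht]; ring
  refine ⟨ht', ?_⟩
  intro j hj
  rcases Nat.lt_or_ge j (k+1) with h | h
  · have hh := h2 j (by omega)
    rw [prefD_succ, Fin.init_snoc, if_neg (by omega), add_zero]
    exact hh
  · rw [prefD_top _ (by omega), ht']
    omega

noncomputable def recEquiv (k : ℕ) (e : ℤ) (he : 0 ≤ e) :
    SW (k+1) e ≃ SW k (e+2) ⊕ SW k (e-1) where
  toFun x :=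
    if hb : x.1 (Fin.last k) = true then
      Sum.inl ⟨Fin.init x.1, by
        obtain ⟨h1, h2⟩ := init_mem x.1 x.2.1 x.2.2
        rw [hb] at h1
        refine ⟨?_, h2⟩
        rw [h1]; simp [wD]⟩
    else
      Sum.inr ⟨Fin.init x.1, by
        rw [Bool.not_eq_true] at hb
        obtain ⟨h1, h2⟩ := init_mem x.1 x.2.1 x.2.2
        rw [hb] at h1
        refine ⟨?_, h2⟩
        rw [h1]; simp [wD]; ring⟩
  invFun y :=
    match y with
    | Sum.inl z => ⟨(Fin.snoc z.1 true : Fin (k+1) → Bool), by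
        refine snoc_mem he true z.1 ?_ z.2.2
        rw [z.2.1]; simp [wD]⟩
    | Sum.inr z => ⟨(Fin.snoc z.1 false : Fin (k+1) → Bool), by
        refine snoc_mem he false z.1 ?_ z.2.2
        rw [z.2.1]; simp [wD]; ring⟩
  left_inv x := by
    by_cases hb : x.1 (Fin.last k) = true
    · simp only [dif_pos hb]
      apply Subtype.ext
      show (Fin.snoc (Fin.init x.1) true : Fin (k+1) → Bool) = x.1
      rw [← hb]
      exact Fin.snoc_init_self x.1
    · simp only [dif_neg hb]
      apply Subtype.ext
      show (Fin.snoc (Fin.init x.1) false : Fin (k+1) → Bool) = x.1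
      rw [Bool.not_eq_true] at hb
      rw [← hb]
      exact Fin.snoc_init_self x.1
  right_inv y := by
    match y with
    | Sum.inl z =>
      have hb : (Fin.snoc z.1 true : Fin (k+1) → Bool) (Fin.last k) = true :=
        Fin.snoc_last _ _
      simp only [dif_pos hb]
      congr 1
      apply Subtype.ext
      show Fin.init (Fin.snoc z.1 true : Fin (k+1) → Bool) = z.1
      exact Fin.init_snoc _ _
    | Sum.inr z =>
      have hb : (Fin.snoc z.1 false : Fin (k+1) → Bool) (Fin.last k) = false :=
        Fin.snoc_last _ _
      simp only [hb, dif_neg, Bool.false_eq_true, not_false_iff]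
      congr 1
      apply Subtype.ext
      show Fin.init (Fin.snoc z.1 false : Fin (k+1) → Bool) = z.1
      exact Fin.init_snoc _ _

lemma gD_rec (k : ℕ) (e : ℤ) (he : 0 ≤ e) :
    gD (k+1) e = gD k (e+2) + gD k (e-1) := by
  rw [gD, gD, gD, ← Nat.card_sum]
  exact Nat.card_congr (recEquiv k e he)

lemma gD_zero : gD 0 0 = 1 := by
  have : Unique (SW 0 0) := {
    default := ⟨fun i => i.elim0, by simp, fun j _ => by simp [prefD]⟩
    uniq := fun x => Subtype.ext (funext fun i => i.elim0) }
  exact Nat.card_unique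

lemma gD_main : ∀ k : ℕ, ∀ t e : ℕ, k = 3*t + e →
    (k+1) * gD k (e : ℤ) = (e+1) * (k+1).choose t := by
  intro k
  induction k with
  | zero =>
    intro t e h
    obtain ⟨rfl, rfl⟩ : t = 0 ∧ e = 0 := by omega
    simp [gD_zero]
  | succ k ih =>
    intro t e hk
    have hrec : gD (k+1) (e:ℤ) = gD k ((e:ℤ)+2) + gD k ((e:ℤ)-1) :=
      gD_rec k e (by positivity)
    rcases Nat.eq_zero_or_pos t with ht | ht
    · -- t = 0, e = k+1
      subst ht
      have he : e = k+1 := by omega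
      subst he
      have hz : gD k ((k+1:ℕ)+2 : ℤ) = 0 := gD_gt (by push_cast; omega)
      have h2 : gD k (((k+1:ℕ):ℤ)-1) = gD k ((k:ℕ):ℤ) := by norm_num
      have h3 := ih 0 k (by omega)
      have h4 : gD k ((k:ℕ):ℤ) = 1 := by
        have := h3
        simp at this
        omega
      have hg : gD (k+1) ((k+1:ℕ):ℤ) = 1 := by
        rw [hrec]
        push_cast at hz h2 h4 ⊢
        rw [hz, h2, h4]
      rw [hg]
      simp
    · -- t ≥ 1
      obtain ⟨t', rfl⟩ : ∃ t', t = t'+1 := ⟨t-1, by omega⟩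
      have hC1 := ih t' (e+2) (by omega)
      -- (k+1) * gD k (e+2) = (e+3) * choose (k+1) t'
      have hC1' : (k+1) * gD k ((e:ℤ)+2) = (e+3) * (k+1).choose t' := by
        have : ((e:ℤ)+2) = ((e+2 : ℕ) : ℤ) := by push_cast; ring
        rw [this]
        convert hC1 using 2
      have hC2 : (k+1) * gD k ((e:ℤ)-1) = e * (k+1).choose (t'+1) := by
        rcases Nat.eq_zero_or_pos e with he | he
        · subst he
          rw [gD_neg (by norm_num)]
          simp
        · obtain ⟨e', rfl⟩ : ∃ e', e = e'+1 := ⟨e-1, by omega⟩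
          have := ih (t'+1) e' (by omega)
          have hcast : ((e'+1:ℕ):ℤ)-1 = ((e':ℕ):ℤ) := by push_cast; ring
          rw [hcast, this]
      -- combine
      have hG : (k+1) * gD (k+1) (e:ℤ) =
          (e+3) * (k+1).choose t' + e * (k+1).choose (t'+1) := by
        rw [hrec, Nat.mul_add, hC1', hC2]
      have hP : (k+2).choose (t'+1) = (k+1).choose t' + (k+1).choose (t'+1) :=
        Nat.choose_succ_succ (k+1) t'
      have hI : (k+1).choose (t'+1) * (t'+1) = (k+1).choose t' * (2*t'+e+3) := by
        have := Nat.choose_succ_right_eq (k+1) t'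
        have hsub : (k+1) - t' = 2*t'+e+3 := by omega
        rwa [hsub] at this
      apply Nat.eq_of_mul_eq_mul_left (show 0 < k+1 by omega)
      have hswap : (k+1) * ((k+2) * gD (k+1) (e:ℤ)) = (k+2) * ((k+1) * gD (k+1) (e:ℤ)) := by ring
      rw [hswap, hG, hP]
      have hk2 : k = 3*t'+e+2 := by omega
      subst hk2
      zify at hI ⊢
      linear_combination (-3:ℤ) * hI


/-- `dCount1 k` is the number of sequences of length `k` with entries `+2` or `-1`
whose partial sums never reach `1` (i.e. are always `≤ 0`) and which end at `0` or `-1`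
(positions `1-1` or `1-2` for target `n = 1`). -/
noncomputable def dCount1 (k : ℕ) : ℕ :=
  Nat.card {ε : Fin k → Bool //
    ((∑ i, (if ε i then (2 : ℤ) else -1)) = 0 ∨
      (∑ i, (if ε i then (2 : ℤ) else -1)) = -1) ∧
    ∀ j, j ≤ k →
      (∑ i ∈ Finset.univ.filter (fun i : Fin k => (i : ℕ) < j),
        (if ε i then (2 : ℤ) else -1)) ≤ 0}

noncomputable def splitEquiv (k : ℕ) :
    {ε : Fin k → Bool //
      ((∑ i, (if ε i then (2 : ℤ) else -1)) = 0 ∨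
        (∑ i, (if ε i then (2 : ℤ) else -1)) = -1) ∧
      ∀ j, j ≤ k →
        (∑ i ∈ Finset.univ.filter (fun i : Fin k => (i : ℕ) < j),
          (if ε i then (2 : ℤ) else -1)) ≤ 0} ≃ SW k 0 ⊕ SW k 1 where
  toFun x :=
    if h : (∑ i, wD (x.1 i)) = 0 then
      Sum.inl ⟨x.1, by rw [h]; norm_num, x.2.2⟩
    else
      Sum.inr ⟨x.1, by
        have := x.2.1
        have h1 : (∑ i, wD (x.1 i)) = -1 := by
          rcases this with h' | h'
          · exact absurd h' h
          · exact h'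
        exact h1, x.2.2⟩
  invFun y :=
    match y with
    | Sum.inl z => ⟨z.1, Or.inl (by have := z.2.1; simpa [wD] using this), z.2.2⟩
    | Sum.inr z => ⟨z.1, Or.inr (by have := z.2.1; simpa [wD] using this), z.2.2⟩
  left_inv x := by
    by_cases h : (∑ i, wD (x.1 i)) = 0
    · simp only [dif_pos h]
    · simp only [dif_neg h]
  right_inv y := by
    match y with
    | Sum.inl z =>
      have h : (∑ i, wD (z.1 i)) = 0 := by have := z.2.1; simpa using this
      simp only [dif_pos h]
      exact congrArg Sum.inl (Subtype.ext rfl)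
    | Sum.inr z =>
      have h : ¬ (∑ i, wD (z.1 i)) = 0 := by
        have := z.2.1
        rw [this]; norm_num
      simp only [dif_neg h]
      exact congrArg Sum.inr (Subtype.ext rfl)

lemma dCount1_eq (k : ℕ) : dCount1 k = gD k 0 + gD k 1 := by
  rw [dCount1, gD, gD, ← Nat.card_sum]
  exact Nat.card_congr (splitEquiv k)

-- binomial identities
lemma I1 (m : ℕ) : (2*m+1) * (3*m+1).choose m = (3*m+1) * (3*m).choose m := by
  have a := Nat.add_one_mul_choose_eq (3*m) m
  have b := Nat.choose_succ_right_eq (3*m+1) m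
  have hsub : (3*m+1) - m = 2*m+1 := by omega
  rw [hsub] at b
  calc (2*m+1) * (3*m+1).choose m = (3*m+1).choose m * (2*m+1) := by ring
    _ = (3*m+1).choose (m+1) * (m+1) := b.symm
    _ = (3*m+1) * (3*m).choose m := by
        rw [← a]

lemma I2 (m : ℕ) : 2*(2*m+1) * (3*m+2).choose m = (3*m+2) * (3*m+1).choose (m+1) := by
  apply Nat.eq_of_mul_eq_mul_right (show 0 < m+1 by omega)
  have a := Nat.add_one_mul_choose_eq (3*m+1) m
  have b := Nat.choose_succ_right_eq (3*m+2) m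
  have c := Nat.choose_succ_right_eq (3*m+1) m
  have hb : (3*m+2) - m = 2*m+2 := by omega
  have hc : (3*m+1) - m = 2*m+1 := by omega
  rw [hb] at b
  rw [hc] at c
  have a' : (3*m+2) * (3*m+1).choose m = (3*m+2).choose (m+1) * (m+1) := a
  nlinarith [a', b, c]

lemma hN1 (m : ℕ) : (2*m+1) * gD (3*m) 0 = (3*m).choose m := by
  have h := gD_main (3*m) m 0 (by omega)
  simp only [Nat.cast_zero] at h
  apply Nat.eq_of_mul_eq_mul_left (show 0 < 3*m+1 by omega)
  calc (3*m+1) * ((2*m+1) * gD (3*m) 0) = (2*m+1) * ((3*m+1) * gD (3*m) 0) := by ring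
    _ = (2*m+1) * ((0+1) * (3*m+1).choose m) := by rw [h]
    _ = (2*m+1) * (3*m+1).choose m := by ring
    _ = (3*m+1) * (3*m).choose m := I1 m

lemma hN2 (m : ℕ) : (2*m+1) * gD (3*m+1) 1 = (3*m+1).choose (m+1) := by
  have h := gD_main (3*m+1) m 1 (by omega)
  simp only [Nat.cast_one] at h
  apply Nat.eq_of_mul_eq_mul_left (show 0 < 3*m+2 by omega)
  calc (3*m+2) * ((2*m+1) * gD (3*m+1) 1) = (2*m+1) * ((3*m+1+1) * gD (3*m+1) 1) := by ring
    _ = (2*m+1) * ((1+1) * (3*m+1+1).choose m) := by rw [h]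
    _ = 2*(2*m+1) * (3*m+2).choose m := by ring_nf
    _ = (3*m+2) * (3*m+1).choose (m+1) := I2 m

/-- `D(1,3m) = binom(3m,m)/(2m+1)`, `D(1,3m+1) = binom(3m+1,m+1)/(2m+1)`,
`D(1,3m+2) = 0`. -/
theorem stmt_14 (m : ℕ) :
    (dCount1 (3 * m) : ℝ) = ((3 * m).choose m : ℝ) / (2 * m + 1) ∧
    (dCount1 (3 * m + 1) : ℝ) = ((3 * m + 1).choose (m + 1) : ℝ) / (2 * m + 1) ∧
    dCount1 (3 * m + 2) = 0 := by
  have hm : (2*(m:ℝ)+1) ≠ 0 := by positivity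
  refine ⟨?_, ?_, ?_⟩
  · have hz : gD (3*m) 1 = 0 := gD_mod (by omega)
    have h := hN1 m
    rw [dCount1_eq, hz, Nat.add_zero]
    have := congrArg (fun n : ℕ => (n : ℝ)) h
    push_cast at this
    field_simp
    linarith
  · have hz : gD (3*m+1) 0 = 0 := gD_mod (by omega)
    have h := hN2 m
    rw [dCount1_eq, hz, Nat.zero_add]
    have := congrArg (fun n : ℕ => (n : ℝ)) h
    push_cast at this
    field_simp
    linarith
  · have hz0 : gD (3*m+2) 0 = 0 := gD_mod (by omega)
    have hz1 : gD (3*m+2) 1 = 0 := gD_mod (by omega)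
    rw [dCount1_eq, hz0, hz1]
end

section
/- The probability p_{1,2} that a player racing to 2 chips beats (moving second) a player racing to 1 chip in the {-1,+1} game equals (4-π)/π, i.e., ∑_{k=1}^∞ q(1,k)·r(2,k) = (4-π)/π, where q(1,2m)=q(1,2m-1)=binomial(2m,m)/4^m and r(2,2m) = binomial(2m,m-1)/(m·4^m). -/
open Real Filter Finset Topology

noncomputable def cb : ℕ → ℝ := fun n => ((2 * n).choose n : ℝ) / 4 ^ n

lemma cb_pos (n : ℕ) : 0 < cb n := by
  unfold cb
  have h : (0:ℝ) < ((2 * n).choose n : ℝ) := by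
    exact_mod_cast Nat.choose_pos (by omega)
  exact div_pos h (by positivity)

lemma cb_succ (n : ℕ) : cb (n + 1) = cb n * (2 * n + 1) / (2 * n + 2) := by
  have h := Nat.succ_mul_centralBinom_succ n
  have h' : ((n : ℝ) + 1) * ((2 * (n + 1)).choose (n + 1) : ℝ)
      = 2 * (2 * n + 1) * ((2 * n).choose n : ℝ) := by
    exact_mod_cast congrArg (Nat.cast (R := ℝ)) h
  unfold cb
  have hn : ((n : ℝ) + 1) ≠ 0 := by positivity
  field_simp
  ring_nf
  ring_nf at h'
  nlinarith [h', sq_nonneg ((4:ℝ)^n), pow_pos (show (0:ℝ) < 4 by norm_num) n]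

lemma term_eq (m : ℕ) :
    (((2 * (m + 1)).choose (m + 1) : ℝ) / 4 ^ (m + 1)) *
      (((2 * (m + 1)).choose m : ℝ) / ((m + 1) * 4 ^ (m + 1)))
    = (cb (m + 1)) ^ 2 / (m + 2) := by
  have h := Nat.choose_succ_right_eq (2 * m + 2) m
  have h2 : 2 * m + 2 - m = m + 2 := by omega
  rw [h2] at h
  have h' : ((2 * m + 2).choose (m + 1) : ℝ) * (m + 1)
      = ((2 * m + 2).choose m : ℝ) * (m + 2) := by exact_mod_cast h
  have hm : (2 * (m + 1)) = 2 * m + 2 := by ring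
  unfold cb
  rw [hm]
  have h1 : ((m : ℝ) + 1) ≠ 0 := by positivity
  have h3 : ((m : ℝ) + 2) ≠ 0 := by positivity
  have h4 : (4 : ℝ) ^ (m + 1) ≠ 0 := by positivity
  field_simp
  linear_combination (-(((2 * m + 2).choose (m + 1) : ℝ))) * h'

lemma partial_sum (N : ℕ) :
    ∑ m ∈ range N, (cb (m + 1)) ^ 2 / (m + 2)
      = (2 * N + 1) ^ 2 * (cb N) ^ 2 / (N + 1) - 1 := by
  induction N with
  | zero => simp [cb]
  | succ N ih =>
    rw [Finset.sum_range_succ, ih, cb_succ]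
    have h1 : ((N : ℝ) + 1) ≠ 0 := by positivity
    have h2 : (2 * (N : ℝ) + 2) ≠ 0 := by positivity
    push_cast
    field_simp
    ring

lemma cb_wallis (N : ℕ) :
    (2 * N + 1) * (cb N) ^ 2 *
      (∏ i ∈ range N, ((2 : ℝ) * i + 2) / (2 * i + 1) * ((2 * i + 2) / (2 * i + 3))) = 1 := by
  induction N with
  | zero => simp [cb]
  | succ N ih =>
    rw [Finset.prod_range_succ, cb_succ]
    have h1 : (2 * (N : ℝ) + 1) ≠ 0 := by positivity
    have h2 : (2 * (N : ℝ) + 2) ≠ 0 := by positivity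
    have h3 : (2 * (N : ℝ) + 3) ≠ 0 := by positivity
    push_cast
    calc (2 * ((N:ℝ) + 1) + 1) * (cb N * (2 * N + 1) / (2 * N + 2)) ^ 2 *
          ((∏ i ∈ range N, ((2 : ℝ) * i + 2) / (2 * i + 1) * ((2 * i + 2) / (2 * i + 3))) *
            ((2 * N + 2) / (2 * N + 1) * ((2 * N + 2) / (2 * N + 3))))
        = (2 * N + 1) * (cb N) ^ 2 *
          (∏ i ∈ range N, ((2 : ℝ) * i + 2) / (2 * i + 1) * ((2 * i + 2) / (2 * i + 3))) := by
          field_simp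
          ring
      _ = 1 := ih

/-- `p_{1,2} = ∑_k q(1,k)·r(2,k) = (4-π)/π` in the `{-1,+1}` game, where only even `k`
contribute: `q(1,2m) = binom(2m,m)/4^m` and `r(2,2m) = binom(2m,m-1)/(m·4^m)`. -/
theorem stmt_19 :
    HasSum (fun m : ℕ =>
      (((2 * (m + 1)).choose (m + 1) : ℝ) / 4 ^ (m + 1)) *
        (((2 * (m + 1)).choose m : ℝ) / ((m + 1) * 4 ^ (m + 1))))
      ((4 - π) / π) := by
  have hnn : ∀ m : ℕ, (0:ℝ) ≤
      (((2 * (m + 1)).choose (m + 1) : ℝ) / 4 ^ (m + 1)) *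
        (((2 * (m + 1)).choose m : ℝ) / ((m + 1) * 4 ^ (m + 1))) := by
    intro m; positivity
  rw [hasSum_iff_tendsto_nat_of_nonneg hnn]
  have hsum : ∀ N : ℕ, ∑ m ∈ range N,
      ((((2 * (m + 1)).choose (m + 1) : ℝ) / 4 ^ (m + 1)) *
        (((2 * (m + 1)).choose m : ℝ) / ((m + 1) * 4 ^ (m + 1))))
      = (2 * N + 1) ^ 2 * (cb N) ^ 2 / (N + 1) - 1 := by
    intro N
    rw [← partial_sum]
    exact Finset.sum_congr rfl fun m _ => term_eq m
  simp_rw [hsum]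
  -- limit computation
  have hπ : (0:ℝ) < π := Real.pi_pos
  have hW := Real.tendsto_prod_pi_div_two
  have hinv : Tendsto (fun N : ℕ => (2 * (N:ℝ) + 1) * (cb N) ^ 2) atTop (𝓝 (2 / π)) := by
    have h2 : Tendsto (fun N => (∏ i ∈ range N,
        ((2 : ℝ) * i + 2) / (2 * i + 1) * ((2 * i + 2) / (2 * i + 3)))⁻¹)
        atTop (𝓝 (π / 2)⁻¹) := hW.inv₀ (by positivity)
    have heq : ∀ N : ℕ, (2 * (N:ℝ) + 1) * (cb N) ^ 2 = (∏ i ∈ range N,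
        ((2 : ℝ) * i + 2) / (2 * i + 1) * ((2 * i + 2) / (2 * i + 3)))⁻¹ := by
      intro N
      have h := cb_wallis N
      rw [mul_comm] at h
      exact eq_inv_of_mul_eq_one_right h
    simp_rw [heq]
    convert h2 using 2
    rw [inv_div]
  have hfrac : Tendsto (fun N : ℕ => (2 * (N:ℝ) + 1) / ((N:ℝ) + 1)) atTop (𝓝 2) := by
    have : ∀ N : ℕ, (2 * (N:ℝ) + 1) / ((N:ℝ) + 1) = 2 - 1 / ((N:ℝ) + 1) := by
      intro N
      have : ((N:ℝ) + 1) ≠ 0 := by positivity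
      field_simp
      ring
    simp_rw [this]
    have : Tendsto (fun n : ℕ => 1 / ((n : ℝ) + 1)) atTop (𝓝 0) := tendsto_one_div_add_atTop_nhds_zero_nat
    have h2 : Tendsto (fun N : ℕ => (2:ℝ) - 1 / ((N:ℝ)+1)) atTop (𝓝 (2 - 0)) :=
      tendsto_const_nhds.sub this
    simpa using h2
  have hmain : Tendsto (fun N : ℕ => (2 * (N:ℝ) + 1) ^ 2 * (cb N) ^ 2 / ((N:ℝ) + 1) - 1)
      atTop (𝓝 (2 * (2 / π) - 1)) := by
    have := (hfrac.mul hinv).sub_const 1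
    convert this using 2 with N
    have : ((N:ℝ) + 1) ≠ 0 := by positivity
    field_simp
  have : 2 * (2 / π) - 1 = (4 - π) / π := by
    field_simp
    norm_num
  rw [this] at hmain
  exact hmain
end
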